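/- (Schwarz–Pick inequality on a distinguished variety, radial-limit case.) Let a = (a₁,a₂) and b = (b₁,b₂) be points of the open bidisk 𝔻². Then there exists a distinguished variety V ∩ 𝔻² (with V = Z(q) the zero set of a polynomial q ∈ ℂ[z,w]) such that the following holds: for every function f : ℂ² → ℂ holomorphic on 𝔻² for which there is a sequence (rₙ) of real numbers with 0 < rₙ < 1, rₙ → 1, and |f(rₙ·z₁, rₙ·z₂)| ≤ 1 for all n and all (z₁,z₂) ∈ V ∩ 𝔻², one has |f(a) − f(b)| ≤ M · |1 − conj(f(a))·f(b)|, where M = max( |a₁ − b₁|/|1 − conj(a₁)·b₁| , |a₂ − b₂|/|1 − conj(a₂)·b₂| ). -/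

import Mathlib

open Filter

/-- The open bidisk `𝔻² ⊆ ℂ²`. -/
def openBidisk : Set (ℂ × ℂ) := {z | ‖z.1‖ < 1 ∧ ‖z.2‖ < 1}

/-- The torus `𝕋²`, the distinguished boundary of the bidisk. -/
def torus : Set (ℂ × ℂ) := {z | ‖z.1‖ = 1 ∧ ‖z.2‖ = 1}

/-- The zero set in `ℂ²` of a polynomial in two variables. -/
def zeroSet (q : MvPolynomial (Fin 2) ℂ) : Set (ℂ × ℂ) :=
  {z | MvPolynomial.eval ![z.1, z.2] q = 0}

/-!
Say ρ(a₂, b₂) ≤ ρ(a₁, b₁) for the pseudo-hyperbolic distance ρ(z, w) = |z - w| / |1 - z̄ w|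
(otherwise exchange the coordinates). Then some finite Blaschke product B has B(a₁) = a₂ and
B(b₁) = b₂: after Möbius changes of variable one needs h(0) = 0 and h(α) = β with |β| ≤ |α|, and
h(u) = u · φ_{-β/α}(φ_α(u)) works, or a rotation when |β| = |α|. Writing B = N / D, the graph of B
over the disk is cut out of the bidisk by w D(z) - N(z); it is a distinguished variety because B is
continuous on the closed disk and unimodular on the circle. On this graph the radial bound gives
|f| ≤ 1 by continuity, and the Schwarz–Pick lemma for ζ ↦ f(ζ, B ζ) at a₁, b₁ gives the inequality.
-/

open Metric Complex ComplexConjugate Set Topology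

noncomputable def mobius (p z : ℂ) : ℂ := (z - p) / (1 - conj p * z)

noncomputable def pseudoHypDist (z w : ℂ) : ℝ := ‖z - w‖ / ‖1 - conj z * w‖

theorem sq_norm_one_sub_conj_mul_sub_sq_norm_sub (p z : ℂ) :
    ‖1 - conj p * z‖ ^ 2 - ‖z - p‖ ^ 2 = (1 - ‖p‖ ^ 2) * (1 - ‖z‖ ^ 2) := by
  simp only [Complex.sq_norm, normSq_apply, sub_re, sub_im, mul_re, mul_im, conj_re, conj_im,
    one_re, one_im]
  ring

theorem one_sub_conj_mul_ne_zero {p z : ℂ} (hp : ‖p‖ < 1) (hz : ‖z‖ ≤ 1) :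
    1 - conj p * z ≠ 0 := by
  rw [sub_ne_zero]
  intro h
  have := congrArg norm h
  rw [norm_one, norm_mul, norm_conj] at this
  nlinarith [norm_nonneg p, norm_nonneg z]

theorem norm_mobius_lt_one {p z : ℂ} (hp : ‖p‖ < 1) (hz : ‖z‖ < 1) : ‖mobius p z‖ < 1 := by
  rw [mobius, norm_div, div_lt_one (norm_pos_iff.2 (one_sub_conj_mul_ne_zero hp hz.le))]
  have hid := sq_norm_one_sub_conj_mul_sub_sq_norm_sub p z
  have hpos : 0 < (1 - ‖p‖ ^ 2) * (1 - ‖z‖ ^ 2) := by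
    apply mul_pos <;> nlinarith [norm_nonneg p, norm_nonneg z]
  exact (sq_lt_sq₀ (norm_nonneg _) (norm_nonneg _)).1 (by linarith)

theorem norm_mobius_eq_one {p z : ℂ} (hp : ‖p‖ < 1) (hz : ‖z‖ = 1) : ‖mobius p z‖ = 1 := by
  rw [mobius, norm_div, div_eq_one_iff_eq (norm_ne_zero_iff.2 (one_sub_conj_mul_ne_zero hp hz.le))]
  have hid := sq_norm_one_sub_conj_mul_sub_sq_norm_sub p z
  rw [hz] at hid
  exact (sq_eq_sq₀ (norm_nonneg _) (norm_nonneg _)).1 (by linarith)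

theorem norm_mobius_le_one {p z : ℂ} (hp : ‖p‖ < 1) (hz : ‖z‖ ≤ 1) : ‖mobius p z‖ ≤ 1 :=
  hz.lt_or_eq.elim (fun h => (norm_mobius_lt_one hp h).le) (fun h => (norm_mobius_eq_one hp h).le)

@[simp] theorem mobius_self (p : ℂ) : mobius p p = 0 := by simp [mobius]

@[simp] theorem mobius_zero (p : ℂ) : mobius p 0 = -p := by simp [mobius]

theorem mobius_neg_mobius {p z : ℂ} (hp : ‖p‖ < 1) (hz : ‖z‖ ≤ 1) :
    mobius (-p) (mobius p z) = z := by
  have hd := one_sub_conj_mul_ne_zero hp hz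
  have hp' : 1 - conj p * p ≠ 0 := one_sub_conj_mul_ne_zero hp hp.le
  have hnum : mobius p z - -p = z * (1 - conj p * p) / (1 - conj p * z) := by
    rw [mobius, eq_div_iff hd, sub_mul, div_mul_cancel₀ _ hd]; ring
  have hden : 1 - conj (-p) * mobius p z = (1 - conj p * p) / (1 - conj p * z) := by
    rw [mobius, eq_div_iff hd, sub_mul, one_mul, mul_assoc, div_mul_cancel₀ _ hd, map_neg]; ring
  rw [mobius, hnum, hden, div_div_div_cancel_right₀ hd, mul_div_cancel_right₀ _ hp']

theorem norm_mobius (p z : ℂ) : ‖mobius p z‖ = pseudoHypDist p z := by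
  rw [mobius, norm_div, norm_sub_rev, pseudoHypDist]

theorem differentiableOn_mobius {p : ℂ} (hp : ‖p‖ < 1) :
    DifferentiableOn ℂ (mobius p) (closedBall 0 1) := by
  intro z hz
  refine ((differentiableAt_id.sub_const p).div (by fun_prop) ?_).differentiableWithinAt
  exact one_sub_conj_mul_ne_zero hp (mem_closedBall_zero_iff.1 hz)

theorem norm_sub_le_pseudoHypDist_mul {g : ℂ → ℂ} (hg : DifferentiableOn ℂ g (ball 0 1))
    (hmaps : MapsTo g (ball 0 1) (closedBall 0 1)) {x y : ℂ} (hx : ‖x‖ < 1) (hy : ‖y‖ < 1) :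
    ‖g x - g y‖ ≤ pseudoHypDist x y * ‖1 - conj (g x) * g y‖ := by
  have hx' : x ∈ ball (0 : ℂ) 1 := mem_ball_zero_iff.2 hx
  have hy' : y ∈ ball (0 : ℂ) 1 := mem_ball_zero_iff.2 hy
  have hgy : ‖g y‖ ≤ 1 := mem_closedBall_zero_iff.1 (hmaps hy')
  rcases (mem_closedBall_zero_iff.1 (hmaps hx')).lt_or_eq with hgx | hgx
  · -- Conjugating by disk automorphisms reduces to the Schwarz lemma at the origin.
    set k := mobius (g x) ∘ g ∘ mobius (-x)
    have hneg : ‖-x‖ < 1 := by rwa [norm_neg]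
    have hball : MapsTo (mobius (-x)) (ball 0 1) (ball 0 1) := fun ζ hζ =>
      mem_ball_zero_iff.2 (norm_mobius_lt_one hneg (mem_ball_zero_iff.1 hζ))
    have hk : DifferentiableOn ℂ k (ball 0 1) :=
      (differentiableOn_mobius hgx).comp
        (hg.comp ((differentiableOn_mobius hneg).mono ball_subset_closedBall) hball)
        (hmaps.comp hball)
    have hkmaps : MapsTo k (ball 0 1) (closedBall 0 1) := fun ζ hζ =>
      mem_closedBall_zero_iff.2
        (norm_mobius_le_one hgx (mem_closedBall_zero_iff.1 (hmaps (hball hζ))))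
    have hk0 : k 0 = 0 := by simp [k]
    have hky : k (mobius x y) = mobius (g x) (g y) := by simp [k, mobius_neg_mobius hx hy.le]
    have hschwarz := Complex.norm_le_norm_of_mapsTo_ball hk hkmaps hk0 (norm_mobius_lt_one hx hy)
    rwa [hky, norm_mobius, norm_mobius, pseudoHypDist,
      div_le_iff₀ (norm_pos_iff.2 (one_sub_conj_mul_ne_zero hgx hgy))] at hschwarz
  · have hmax : IsMaxOn (norm ∘ g) (ball 0 1) x := fun z hz => by
      simpa [hgx] using mem_closedBall_zero_iff.1 (hmaps hz)
    have hconst := Complex.eqOn_of_isPreconnected_of_isMaxOn_norm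
      (convex_ball (0 : ℂ) 1).isPreconnected isOpen_ball hg hx' hmax hy'
    rw [hconst]
    simp only [Function.const_apply, sub_self, norm_zero]
    exact mul_nonneg (div_nonneg (norm_nonneg _) (norm_nonneg _)) (norm_nonneg _)

inductive IsFiniteBlaschke : (ℂ → ℂ) → Prop
  | id : IsFiniteBlaschke id
  | const_mul {c : ℂ} {B : ℂ → ℂ} : ‖c‖ = 1 → IsFiniteBlaschke B →
      IsFiniteBlaschke fun z => c * B z
  | mul {B₁ B₂ : ℂ → ℂ} : IsFiniteBlaschke B₁ → IsFiniteBlaschke B₂ → IsFiniteBlaschke (B₁ * B₂)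
  | mobius_comp {p : ℂ} {B : ℂ → ℂ} : ‖p‖ < 1 → IsFiniteBlaschke B →
      IsFiniteBlaschke (mobius p ∘ B)

theorem isFiniteBlaschke_mobius {p : ℂ} (hp : ‖p‖ < 1) : IsFiniteBlaschke (mobius p) :=
  .mobius_comp hp .id

namespace IsFiniteBlaschke

variable {B : ℂ → ℂ}

theorem comp {C : ℂ → ℂ} (hB : IsFiniteBlaschke B) (hC : IsFiniteBlaschke C) :
    IsFiniteBlaschke (B ∘ C) := by
  induction hB with
  | id => exact hC
  | const_mul hc _ ih => exact ih.const_mul hc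
  | mul _ _ ih₁ ih₂ => exact ih₁.mul ih₂
  | mobius_comp hp _ ih => exact ih.mobius_comp hp

theorem norm_lt_one (hB : IsFiniteBlaschke B) {z : ℂ} (hz : ‖z‖ < 1) : ‖B z‖ < 1 := by
  induction hB with
  | id => exact hz
  | const_mul hc _ ih => rw [norm_mul, hc, one_mul]; exact ih
  | mul _ _ ih₁ ih₂ =>
    rw [Pi.mul_apply, norm_mul]
    exact mul_lt_one_of_nonneg_of_lt_one_left (norm_nonneg _) ih₁ ih₂.le
  | mobius_comp hp _ ih => exact norm_mobius_lt_one hp ih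

theorem norm_eq_one (hB : IsFiniteBlaschke B) {z : ℂ} (hz : ‖z‖ = 1) : ‖B z‖ = 1 := by
  induction hB with
  | id => exact hz
  | const_mul hc _ ih => rw [norm_mul, hc, ih, one_mul]
  | mul _ _ ih₁ ih₂ => rw [Pi.mul_apply, norm_mul, ih₁, ih₂, one_mul]
  | mobius_comp hp _ ih => exact norm_mobius_eq_one hp ih

theorem norm_le_one (hB : IsFiniteBlaschke B) {z : ℂ} (hz : ‖z‖ ≤ 1) : ‖B z‖ ≤ 1 :=
  hz.lt_or_eq.elim (fun h => (hB.norm_lt_one h).le) (fun h => (hB.norm_eq_one h).le)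

open Polynomial in
theorem exists_eq_div (hB : IsFiniteBlaschke B) :
    ∃ N D : ℂ[X], ∀ z : ℂ, ‖z‖ ≤ 1 → D.eval z ≠ 0 ∧ B z = N.eval z / D.eval z := by
  induction hB with
  | id => exact ⟨X, 1, fun z _ => by simp⟩
  | @const_mul c _ _ _ ih =>
    obtain ⟨N, D, h⟩ := ih
    exact ⟨C c * N, D, fun z hz => ⟨(h z hz).1, by simp [(h z hz).2, mul_div_assoc]⟩⟩
  | mul _ _ ih₁ ih₂ =>
    obtain ⟨N₁, D₁, h₁⟩ := ih₁
    obtain ⟨N₂, D₂, h₂⟩ := ih₂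
    refine ⟨N₁ * N₂, D₁ * D₂, fun z hz => ⟨?_, ?_⟩⟩
    · simpa using ⟨(h₁ z hz).1, (h₂ z hz).1⟩
    · simp [(h₁ z hz).2, (h₂ z hz).2, div_mul_div_comm]
  | @mobius_comp p B' hp hB' ih =>
    obtain ⟨N, D, h⟩ := ih
    refine ⟨N - C p * D, D - C (conj p) * N, fun z hz => ?_⟩
    obtain ⟨hD, hBz⟩ := h z hz
    -- `D - p̄ N = D (1 - p̄ B)` does not vanish since `‖B‖ ≤ 1`.
    have hD' : D.eval z - conj p * N.eval z ≠ 0 := by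
      have := mul_ne_zero hD (one_sub_conj_mul_ne_zero hp (hB'.norm_le_one hz))
      rwa [hBz, mul_sub, mul_one, ← mul_assoc, mul_comm (D.eval z), mul_assoc,
        mul_div_cancel₀ _ hD] at this
    refine ⟨by simpa using hD', ?_⟩
    simp only [Function.comp_apply, mobius, hBz, eval_sub, eval_mul, eval_C]
    field_simp

theorem differentiableOn (hB : IsFiniteBlaschke B) : DifferentiableOn ℂ B (closedBall 0 1) := by
  obtain ⟨N, D, h⟩ := hB.exists_eq_div
  refine (N.differentiableOn.div D.differentiableOn fun z hz => ?_).congr fun z hz => ?_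
  · exact (h z (mem_closedBall_zero_iff.1 hz)).1
  · exact (h z (mem_closedBall_zero_iff.1 hz)).2

open Polynomial in
theorem exists_zeroSet_inter_openBidisk_eq_graph (hB : IsFiniteBlaschke B) :
    ∃ q, zeroSet q ∩ openBidisk = (fun z => (z, B z)) '' ball 0 1 := by
  obtain ⟨N, D, h⟩ := hB.exists_eq_div
  refine ⟨MvPolynomial.X 1 * D.toMvPolynomial 0 - N.toMvPolynomial 0, ?_⟩
  ext ⟨z, w⟩
  simp only [zeroSet, openBidisk, mem_inter_iff, mem_ofPred_eq, map_sub, map_mul,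
    MvPolynomial.eval_X, MvPolynomial.eval_toMvPolynomial, Matrix.cons_val_zero,
    Matrix.cons_val_one, mem_image, mem_ball_zero_iff, Prod.mk.injEq]
  constructor
  · rintro ⟨hzero, hz, -⟩
    obtain ⟨hD, hBz⟩ := h z hz.le
    exact ⟨z, hz, rfl, by rw [hBz, div_eq_iff hD]; linear_combination -hzero⟩
  · rintro ⟨_, hz, rfl, rfl⟩
    obtain ⟨hD, hBz⟩ := h _ hz.le
    exact ⟨by rw [hBz, div_mul_cancel₀ _ hD, sub_self], hz, hB.norm_lt_one hz⟩

end IsFiniteBlaschke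

theorem exists_isFiniteBlaschke_interpolating_zero {α β : ℂ} (hα : ‖α‖ < 1) (hβα : ‖β‖ ≤ ‖α‖) :
    ∃ h, IsFiniteBlaschke h ∧ h 0 = 0 ∧ h α = β := by
  rcases hβα.lt_or_eq with hlt | heq
  · have hα0 : α ≠ 0 := norm_pos_iff.1 ((norm_nonneg β).trans_lt hlt)
    have hγ : ‖-(β / α)‖ < 1 := by
      rwa [norm_neg, norm_div, div_lt_one (norm_pos_iff.2 hα0)]
    refine ⟨id * (mobius (-(β / α)) ∘ mobius α),
      .mul .id (.mobius_comp hγ (isFiniteBlaschke_mobius hα)), by simp, ?_⟩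
    simp [div_mul_cancel₀ _ hα0, mul_comm α]
  · obtain ⟨c, hc, rfl⟩ : ∃ c : ℂ, ‖c‖ = 1 ∧ β = c * α := by
      by_cases hα0 : α = 0
      · exact ⟨1, norm_one, by rw [hα0, mul_zero, ← norm_eq_zero, heq, hα0, norm_zero]⟩
      · exact ⟨β / α, by rw [norm_div, heq, div_self (norm_ne_zero_iff.2 hα0)],
          (div_mul_cancel₀ _ hα0).symm⟩
    exact ⟨fun z => c * id z, .const_mul hc .id, by simp, rfl⟩

theorem exists_isFiniteBlaschke_interpolating {a₁ a₂ b₁ b₂ : ℂ} (ha₁ : ‖a₁‖ < 1)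
    (hb₁ : ‖b₁‖ < 1) (ha₂ : ‖a₂‖ < 1) (hb₂ : ‖b₂‖ < 1)
    (h : pseudoHypDist a₂ b₂ ≤ pseudoHypDist a₁ b₁) :
    ∃ B, IsFiniteBlaschke B ∧ B a₁ = a₂ ∧ B b₁ = b₂ := by
  rw [← norm_mobius, ← norm_mobius] at h
  obtain ⟨k, hk, hk0, hkα⟩ :=
    exists_isFiniteBlaschke_interpolating_zero (norm_mobius_lt_one ha₁ hb₁) h
  have ha₂' : ‖-a₂‖ < 1 := by rwa [norm_neg]
  refine ⟨mobius (-a₂) ∘ k ∘ mobius a₁,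
    .mobius_comp ha₂' (hk.comp (isFiniteBlaschke_mobius ha₁)), ?_, ?_⟩
  · simp [hk0]
  · simp [hkα, mobius_neg_mobius ha₂ hb₂.le]

theorem norm_le_of_tendsto_smul {𝕜 E F ι : Type*} [NormedField 𝕜] [NormedAddCommGroup E]
    [NormedSpace 𝕜 E] [SeminormedAddCommGroup F] {l : Filter ι} [l.NeBot] {c : ι → 𝕜}
    {f : E → F} {p : E} {C : ℝ} (hf : ContinuousAt f p) (hc : Tendsto c l (𝓝 1))
    (h : ∀ i, ‖f (c i • p)‖ ≤ C) : ‖f p‖ ≤ C := by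
  have hp : Tendsto (fun i => c i • p) l (𝓝 p) := by simpa using hc.smul_const p
  exact le_of_tendsto' (hf.tendsto.comp hp).norm h

theorem isOpen_openBidisk : IsOpen openBidisk :=
  (isOpen_lt (continuous_norm.comp continuous_fst) continuous_const).inter
    (isOpen_lt (continuous_norm.comp continuous_snd) continuous_const)

theorem closure_image_ball_inter_frontier_subset_torus {Φ : ℂ → ℂ × ℂ}
    (hΦ : ContinuousOn Φ (closedBall 0 1)) (hball : MapsTo Φ (ball 0 1) openBidisk)
    (hsphere : MapsTo Φ (sphere 0 1) torus) :
    closure (Φ '' ball 0 1) ∩ frontier openBidisk ⊆ torus := by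
  have hclosure : closure (Φ '' ball 0 1) ⊆ Φ '' closedBall 0 1 :=
    closure_minimal (image_mono ball_subset_closedBall)
      ((isCompact_closedBall 0 1).image_of_continuousOn hΦ).isClosed
  rintro _ ⟨hx, hfr⟩
  obtain ⟨z, hz, rfl⟩ := hclosure hx
  rw [← ball_union_sphere] at hz
  rcases hz with hz | hz
  · rw [isOpen_openBidisk.frontier_eq] at hfr
    exact absurd (hball hz) hfr.2
  · exact hsphere hz

theorem zeroSet_rename_swap_inter_openBidisk (q : MvPolynomial (Fin 2) ℂ) :
    zeroSet (MvPolynomial.rename (Equiv.swap 0 1) q) ∩ openBidisk =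
      Prod.swap '' (zeroSet q ∩ openBidisk) := by
  rw [image_swap_eq_preimage_swap]
  ext p
  simp [zeroSet, openBidisk, MvPolynomial.eval_rename, and_comm]

def IsSchwarzPickVariety (q : MvPolynomial (Fin 2) ℂ) (a b : ℂ × ℂ) (M : ℝ) : Prop :=
  (zeroSet q ∩ openBidisk).Nonempty ∧
    closure (zeroSet q ∩ openBidisk) ∩ frontier openBidisk ⊆ torus ∧
    ∀ f : ℂ × ℂ → ℂ, DifferentiableOn ℂ f openBidisk →
      (∃ r : ℕ → ℝ, (∀ n, 0 < r n ∧ r n < 1) ∧ Tendsto r atTop (𝓝 1) ∧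
        ∀ n, ∀ z ∈ zeroSet q ∩ openBidisk, ‖f ((r n : ℂ) * z.1, (r n : ℂ) * z.2)‖ ≤ 1) →
      ‖f a - f b‖ ≤ M * ‖1 - conj (f a) * f b‖

theorem IsSchwarzPickVariety.mono {q : MvPolynomial (Fin 2) ℂ} {a b : ℂ × ℂ} {M M' : ℝ}
    (h : IsSchwarzPickVariety q a b M) (hM : M ≤ M') : IsSchwarzPickVariety q a b M' :=
  ⟨h.1, h.2.1, fun f hf hr =>
    (h.2.2 f hf hr).trans (mul_le_mul_of_nonneg_right hM (norm_nonneg _))⟩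

theorem isSchwarzPickVariety_of_eq_image {q : MvPolynomial (Fin 2) ℂ} {Φ : ℂ → ℂ × ℂ}
    (hq : zeroSet q ∩ openBidisk = Φ '' ball 0 1) (hΦ : DifferentiableOn ℂ Φ (closedBall 0 1))
    (hsphere : MapsTo Φ (sphere 0 1) torus) {x y : ℂ} (hx : ‖x‖ < 1) (hy : ‖y‖ < 1) :
    IsSchwarzPickVariety q (Φ x) (Φ y) (pseudoHypDist x y) := by
  have hball : MapsTo Φ (ball 0 1) openBidisk := fun z hz =>
    (hq.symm ▸ mem_image_of_mem Φ hz : Φ z ∈ zeroSet q ∩ openBidisk).2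
  refine ⟨hq ▸ (nonempty_ball.2 one_pos).image Φ,
    hq ▸ closure_image_ball_inter_frontier_subset_torus hΦ.continuousOn hball hsphere,
    fun f hf ⟨r, _, hr, hbound⟩ => ?_⟩
  rw [hq] at hbound
  have hr' : Tendsto (fun n => (r n : ℂ)) atTop (𝓝 1) := by
    simpa [Function.comp_def] using (continuous_ofReal.tendsto 1).comp hr
  refine norm_sub_le_pseudoHypDist_mul (g := f ∘ Φ)
    (hf.comp (hΦ.mono ball_subset_closedBall) hball) (fun ζ hζ => ?_) hx hy
  exact mem_closedBall_zero_iff.2 <| norm_le_of_tendsto_smul (f := f) (p := Φ ζ)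
    (hf.continuousOn.continuousAt (isOpen_openBidisk.mem_nhds (hball hζ))) hr'
    fun n => hbound n _ (mem_image_of_mem Φ hζ)

namespace IsFiniteBlaschke

variable {B : ℂ → ℂ}

theorem exists_isSchwarzPickVariety (hB : IsFiniteBlaschke B) {x y : ℂ} (hx : ‖x‖ < 1)
    (hy : ‖y‖ < 1) : ∃ q, IsSchwarzPickVariety q (x, B x) (y, B y) (pseudoHypDist x y) := by
  obtain ⟨q, hq⟩ := hB.exists_zeroSet_inter_openBidisk_eq_graph
  refine ⟨q, isSchwarzPickVariety_of_eq_image hq (differentiableOn_id.prodMk hB.differentiableOn)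
    (fun z hz => ?_) hx hy⟩
  rw [mem_sphere_zero_iff_norm] at hz
  exact ⟨hz, hB.norm_eq_one hz⟩

theorem exists_isSchwarzPickVariety_swap (hB : IsFiniteBlaschke B) {x y : ℂ} (hx : ‖x‖ < 1)
    (hy : ‖y‖ < 1) : ∃ q, IsSchwarzPickVariety q (B x, x) (B y, y) (pseudoHypDist x y) := by
  obtain ⟨q, hq⟩ := hB.exists_zeroSet_inter_openBidisk_eq_graph
  refine ⟨_, isSchwarzPickVariety_of_eq_image (Φ := fun z => (B z, z))
    (by rw [zeroSet_rename_swap_inter_openBidisk, hq, image_image]; rfl)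
    (hB.differentiableOn.prodMk differentiableOn_id) (fun z hz => ?_) hx hy⟩
  rw [mem_sphere_zero_iff_norm] at hz
  exact ⟨hB.norm_eq_one hz, hz⟩

end IsFiniteBlaschke

/-- **A Schwarz–Pick inequality on a distinguished variety of the bidisk (radial-limit
case).** -/
theorem schwarz_pick_distinguished_variety_radial (a b : ℂ × ℂ)
    (ha : a ∈ openBidisk) (hb : b ∈ openBidisk) :
    ∃ q : MvPolynomial (Fin 2) ℂ,
      (zeroSet q ∩ openBidisk).Nonempty ∧
      closure (zeroSet q ∩ openBidisk) ∩ frontier openBidisk ⊆ torus ∧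
      ∀ f : ℂ × ℂ → ℂ, DifferentiableOn ℂ f openBidisk →
        (∃ r : ℕ → ℝ, (∀ n, 0 < r n ∧ r n < 1) ∧ Tendsto r atTop (nhds 1) ∧
          ∀ n, ∀ z ∈ zeroSet q ∩ openBidisk,
            ‖f ((r n : ℂ) * z.1, (r n : ℂ) * z.2)‖ ≤ 1) →
        ‖f a - f b‖ ≤
          max (‖a.1 - b.1‖ / ‖1 - (starRingEnd ℂ) a.1 * b.1‖)
              (‖a.2 - b.2‖ / ‖1 - (starRingEnd ℂ) a.2 * b.2‖) *
            ‖1 - (starRingEnd ℂ) (f a) * f b‖ := by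
  obtain ⟨ha₁, ha₂⟩ := ha
  obtain ⟨hb₁, hb₂⟩ := hb
  rcases le_total (pseudoHypDist a.2 b.2) (pseudoHypDist a.1 b.1) with h | h
  · obtain ⟨B, hB, hBa, hBb⟩ := exists_isFiniteBlaschke_interpolating ha₁ hb₁ ha₂ hb₂ h
    obtain ⟨q, hq⟩ := hB.exists_isSchwarzPickVariety ha₁ hb₁
    rw [hBa, hBb] at hq
    exact ⟨q, hq.mono (le_max_left _ _)⟩
  · obtain ⟨B, hB, hBa, hBb⟩ := exists_isFiniteBlaschke_interpolating ha₂ hb₂ ha₁ hb₁ h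
    obtain ⟨q, hq⟩ := hB.exists_isSchwarzPickVariety_swap ha₂ hb₂
    rw [hBa, hBb] at hq
    exact ⟨q, hq.mono (le_max_right _ _)⟩
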